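/- For every positive integer k there exists an interval digraph G with bimimw(G) ≥ k. -/

import Mathlib

/-!
The witness is the interval digraph on `ι × ι`, `|ι| = 2k + 2`, with `S (i, j) = {i}` and
`T (i, j) = {j}`, so that `(i, j) → (i', j')` iff `i = j'`. Every branch decomposition has an edge
whose sides `A`, `Aᶜ` both have more than `k²` vertices. Call `i` mixed if its row `{(i, ·)}`
meets one side and its column `{(·, i)}` the other. Mixed indices give edges `(i, j) → (j', i)`
between the sides, forming an induced matching in each direction since `(i, j) → (j', i')` is an
edge only when `i = i'`. If at most `k` indices are mixed, some index has its row and column on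
one side; then both coordinates of every vertex on the other side are mixed, so that side has at
most `k²` vertices.
-/

open scoped Classical

/-- An induced matching in a digraph with edge relation `D`: a finite set of edges of `D`,
no two of which share an endpoint, such that no edge of `D` joins an endpoint of one
matching edge to an endpoint of a different matching edge. -/
def IsIndMatching {V : Type} (D : V → V → Prop) (M : Finset (V × V)) : Prop :=
  (∀ e ∈ M, D e.1 e.2) ∧
    ∀ e ∈ M, ∀ f ∈ M, e ≠ f →
      ∀ x, (x = e.1 ∨ x = e.2) → ∀ y, (y = f.1 ∨ y = f.2) → x ≠ y ∧ ¬D x y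

/-- `ν(D)`: the maximum size of an induced matching in the digraph `D`. -/
noncomputable def nu {V : Type} (D : V → V → Prop) : ℕ :=
  sSup {n | ∃ M : Finset (V × V), IsIndMatching D M ∧ M.card = n}

/-- The bipartite digraph `G[A→B]`, whose edges are the edges of `E` from `A` to `B`. -/
def cutRel {V : Type} (E : V → V → Prop) (A B : Set V) : V → V → Prop :=
  fun x y => x ∈ A ∧ y ∈ B ∧ E x y

/-- `bimim_G(A) = ν(G[A→Ā]) + ν(G[Ā→A])`. -/
noncomputable def bimimCut {V : Type} (E : V → V → Prop) (A : Set V) : ℕ :=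
  nu (cutRel E A Aᶜ) + nu (cutRel E Aᶜ A)

/-- For an undirected graph `G`, `mim_G(A) = ν(G[A, Ā])`. -/
noncomputable def mimCut {V : Type} (G : SimpleGraph V) (A : Set V) : ℕ :=
  nu (cutRel G.Adj A Aᶜ)
/-- A caterpillar: a tree containing a path such that every vertex outside the path
has a neighbor on the path. -/
def IsCaterpillar {L : Type} (T : SimpleGraph L) : Prop :=
  ∃ (u v : L) (p : T.Walk u v), p.IsPath ∧
    ∀ w : L, w ∉ p.support → ∃ x ∈ p.support, T.Adj w x

/-- A branch decomposition of a (di)graph on vertex set `V`: a subcubic tree (at least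
two vertices, every internal vertex of degree 3) together with a bijection from `V`
to the set of leaves of the tree. -/
structure BranchDecomp (V : Type) where
  L : Type
  finL : Finite L
  T : SimpleGraph L
  isTree : T.IsTree
  two_le : 2 ≤ Nat.card L
  subcubic : ∀ t : L, (T.neighborSet t).ncard = 1 ∨ (T.neighborSet t).ncard = 3
  toLeaf : V → L
  inj : Function.Injective toLeaf
  mem_leaf : ∀ v : V, (T.neighborSet (toLeaf v)).ncard = 1
  surj : ∀ t : L, (T.neighborSet t).ncard = 1 → ∃ v, toLeaf v = t

/-- The side `A_e` of the cut induced by the tree edge `{t₁, t₂}`: the set of vertices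
mapped to leaves in the component of `T - e` containing `t₁`. -/
def BranchDecomp.side {V : Type} (bd : BranchDecomp V) (t₁ t₂ : bd.L) : Set V :=
  {v | (bd.T.deleteEdges {s(t₁, t₂)}).Reachable t₁ (bd.toLeaf v)}

/-- The bi-mim-width of a branch decomposition with respect to a digraph. -/
noncomputable def BranchDecomp.width {V : Type} (bd : BranchDecomp V)
    (E : V → V → Prop) : ℕ :=
  sSup {n | ∃ t₁ t₂, bd.T.Adj t₁ t₂ ∧ n = bimimCut E (bd.side t₁ t₂)}

/-- The mim-width of a branch decomposition with respect to an undirected graph. -/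
noncomputable def BranchDecomp.uwidth {V : Type} (bd : BranchDecomp V)
    (G : SimpleGraph V) : ℕ :=
  sSup {n | ∃ t₁ t₂, bd.T.Adj t₁ t₂ ∧ n = mimCut G (bd.side t₁ t₂)}

/-- The bi-mim-width of a digraph. -/
noncomputable def bimimw {V : Type} (E : V → V → Prop) : ℕ :=
  sInf {n | ∃ bd : BranchDecomp V, bd.width E = n}

/-- The linear bi-mim-width of a digraph. -/
noncomputable def lbimimw {V : Type} (E : V → V → Prop) : ℕ :=
  sInf {n | ∃ bd : BranchDecomp V, IsCaterpillar bd.T ∧ bd.width E = n}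

/-- The mim-width of an undirected graph. -/
noncomputable def mimw {V : Type} (G : SimpleGraph V) : ℕ :=
  sInf {n | ∃ bd : BranchDecomp V, bd.uwidth G = n}

/-- The linear mim-width of an undirected graph. -/
noncomputable def lmimw {V : Type} (G : SimpleGraph V) : ℕ :=
  sInf {n | ∃ bd : BranchDecomp V, IsCaterpillar bd.T ∧ bd.uwidth G = n}


section InducedMatching

variable {V : Type} [Fintype V] {D : V → V → Prop}

lemma card_le_nu {M : Finset (V × V)} (hM : IsIndMatching D M) : M.card ≤ nu D :=
  le_csSup ⟨Fintype.card (V × V), fun _ ⟨M', _, hc⟩ => hc ▸ M'.card_le_univ⟩ ⟨M, hM, rfl⟩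

lemma nu_le_card : nu D ≤ Fintype.card (V × V) :=
  csSup_le ⟨0, ∅, ⟨by simp, by simp⟩, rfl⟩ fun _ ⟨M, _, hc⟩ => hc ▸ M.card_le_univ

lemma card_le_nu_cutRel {ι : Type} {E : V → V → Prop} {A : Set V} (I : Finset ι)
    (a b : ι → V) (ha : ∀ i ∈ I, a i ∈ A) (hb : ∀ i ∈ I, b i ∉ A)
    (hE : ∀ i ∈ I, ∀ j ∈ I, E (a i) (b j) ↔ i = j) :
    I.card ≤ nu (cutRel E A Aᶜ) := by
  have ha_inj : Set.InjOn a I := fun i hi j hj hij =>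
    ((hE j hj i hi).1 (hij ▸ (hE i hi i hi).2 rfl)).symm
  have hb_inj : Set.InjOn b I := fun i hi j hj hij =>
    (hE i hi j hj).1 (hij ▸ (hE i hi i hi).2 rfl)
  rw [← Finset.card_image_of_injOn (f := fun i => (a i, b i))
    fun i hi j hj hij => ha_inj hi hj (Prod.mk.inj hij).1]
  refine card_le_nu ⟨?_, ?_⟩
  · simp only [Finset.mem_image]
    rintro _ ⟨i, hi, rfl⟩
    exact ⟨ha i hi, hb i hi, (hE i hi i hi).2 rfl⟩
  · simp only [Finset.mem_image]
    rintro _ ⟨i, hi, rfl⟩ _ ⟨j, hj, rfl⟩ hne x hx y hy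
    have hij : i ≠ j := fun h => hne (h ▸ rfl)
    rcases hx with rfl | rfl <;> rcases hy with rfl | rfl
    · exact ⟨fun h => hij (ha_inj hi hj h), fun h => h.2.1 (ha j hj)⟩
    · exact ⟨fun h : a i = b j => hb j hj (h ▸ ha i hi), fun h => hij ((hE i hi j hj).1 h.2.2)⟩
    · exact ⟨fun h : b i = a j => hb i hi (h ▸ ha j hj), fun h => hb i hi h.1⟩
    · exact ⟨fun h => hij (hb_inj hi hj h), fun h => hb i hi h.1⟩

end InducedMatching

namespace SimpleGraph

variable {L : Type} {G : SimpleGraph L} {s t x : L}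

def branch (G : SimpleGraph L) (s t : L) : Set L :=
  {x | (G.deleteEdges {s(s, t)}).Reachable s x}

lemma self_mem_branch (G : SimpleGraph L) (s t : L) : s ∈ G.branch s t := Reachable.refl _

lemma mem_branch_swap : x ∈ G.branch t s ↔ (G.deleteEdges {s(s, t)}).Reachable t x := by
  rw [branch, Sym2.eq_swap]; rfl

lemma reachable_deleteEdges_or {u v w : L} (h : G.Reachable w u) :
    (G.deleteEdges {s(u, v)}).Reachable u w ∨ (G.deleteEdges {s(u, v)}).Reachable v w := by
  obtain ⟨p⟩ := h
  induction p with
  | nil => exact Or.inl .rfl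
  | @cons x y u hxy _ ih =>
    by_cases he : s(x, y) = s(u, v)
    · rcases Sym2.eq_iff.1 he with ⟨rfl, -⟩ | ⟨rfl, -⟩
      · exact Or.inl .rfl
      · exact Or.inr .rfl
    · have hyx : (G.deleteEdges {s(u, v)}).Reachable y x :=
        (deleteEdges_adj.2 ⟨hxy, he⟩).symm.reachable
      exact ih.imp (·.trans hyx) (·.trans hyx)

lemma exists_adj_mem_branch (hx : x ∈ G.branch s t) (hxs : x ≠ s) :
    ∃ c, G.Adj s c ∧ c ≠ t ∧ x ∈ G.branch c s := by
  classical
  obtain ⟨p, hp⟩ := reachable_deleteEdges_iff_exists_walk.1 hx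
  have hpath := p.bypass_isPath
  have hsub := p.edges_bypass_subset_edges
  cases hq : p.bypass with
  | nil => exact absurd rfl hxs
  | @cons _ c _ hsc q =>
    rw [hq] at hpath hsub
    refine ⟨c, hsc, ?_, reachable_deleteEdges_iff_exists_walk.2 ⟨q, fun h => ?_⟩⟩
    · rintro rfl
      exact hp (hsub (by simp))
    · exact ((Walk.cons_isPath_iff _ _).1 hpath).2 (q.snd_mem_support_of_mem_edges h)

lemma branch_subset_singleton (h : G.neighborSet s ⊆ {t}) : G.branch s t ⊆ {s} :=
  fun _ hx => by_contra fun hxs => by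
    obtain ⟨c, hsc, hct, -⟩ := exists_adj_mem_branch hx hxs
    exact hct (h hsc)

namespace IsAcyclic

variable (hG : G.IsAcyclic)
include hG

lemma not_reachable_deleteEdges (h : G.Adj s t) : ¬ (G.deleteEdges {s(s, t)}).Reachable s t :=
  isBridge_iff.1 (isAcyclic_iff_forall_adj_isBridge.1 hG h)

lemma not_mem_branch (h : G.Adj s t) : s ∉ G.branch t s :=
  hG.not_reachable_deleteEdges h.symm

lemma branch_subset {a : L} (hsa : G.Adj s a) (hat : a ≠ t) : G.branch a s ⊆ G.branch s t := by
  intro x hx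
  obtain ⟨p, hp⟩ := reachable_deleteEdges_iff_exists_walk.1 hx
  have hs : s ∉ p.support := fun hs => hG.not_mem_branch hsa <|
    reachable_deleteEdges_iff_exists_walk.2
      ⟨p.takeUntil s hs, fun h => hp (p.edges_takeUntil_subset_edges hs h)⟩
  refine reachable_deleteEdges_iff_exists_walk.2 ⟨.cons hsa p, ?_⟩
  rw [Walk.edges_cons, List.mem_cons, not_or]
  exact ⟨by simp [hat.symm, hsa.ne], fun h => hs (p.fst_mem_support_of_mem_edges h)⟩

lemma branch_ssubset {a : L} (hsa : G.Adj s a) (hat : a ≠ t) : G.branch a s ⊂ G.branch s t :=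
  ⟨hG.branch_subset hsa hat, fun h => hG.not_mem_branch hsa (h (G.self_mem_branch s t))⟩

end IsAcyclic

lemma IsTree.compl_branch (hG : G.IsTree) (h : G.Adj s t) : (G.branch s t)ᶜ = G.branch t s := by
  ext x
  rw [Set.mem_compl_iff, mem_branch_swap (s := s) (t := t)]
  have hcover := reachable_deleteEdges_or (v := t) (hG.connected.preconnected x s)
  have hdisj : (G.deleteEdges {s(s, t)}).Reachable s x →
      ¬ (G.deleteEdges {s(s, t)}).Reachable t x :=
    fun hs ht => hG.isAcyclic.not_reachable_deleteEdges h (hs.trans ht.symm)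
  exact ⟨hcover.resolve_left, fun ht hs => hdisj hs ht⟩

variable {p : L → L}

def ofParent (p : L → L) : SimpleGraph L where
  Adj x y := x ≠ y ∧ (p x = y ∨ p y = x)
  symm := ⟨fun _ _ h => ⟨h.1.symm, h.2.symm⟩⟩
  loopless := ⟨fun _ h => h.1 rfl⟩

lemma ofParent_adj {x y : L} : (ofParent p).Adj x y ↔ x ≠ y ∧ (p x = y ∨ p y = x) := Iff.rfl

/-- Every vertex reaches `r` through its parents, and `x ↦ s(x, p x)` maps the non-root vertices
bijectively onto the edges. -/
lemma isTree_ofParent [Finite L] {r : L} {h : L → ℕ} (hr : p r = r)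
    (hd : ∀ x ≠ r, h (p x) < h x) : (ofParent p).IsTree := by
  have hne : ∀ x ≠ r, x ≠ p x := fun x hx he => (hd x hx).ne (congrArg h he.symm)
  have hreach : ∀ x, (ofParent p).Reachable x r := by
    intro x
    induction hx : h x using Nat.strong_induction_on generalizing x with
    | _ n ih =>
      by_cases hxr : x = r
      · exact hxr ▸ .rfl
      · exact (ofParent_adj.2 ⟨hne x hxr, Or.inl rfl⟩).reachable.trans
          (ih _ (hx ▸ hd x hxr) _ rfl)
  let f : {x // x ≠ r} → (ofParent p).edgeSet :=
    fun x => ⟨s(x, p x), ofParent_adj.2 ⟨hne x x.2, Or.inl rfl⟩⟩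
  have hf : f.Bijective := by
    constructor
    · rintro ⟨x, hx⟩ ⟨y, hy⟩ hxy
      rcases Sym2.eq_iff.1 (Subtype.ext_iff.1 hxy) with ⟨rfl, -⟩ | ⟨hxpy, hpxy⟩
      · rfl
      · simp only at hxpy hpxy
        have hx' := hd x hx
        have hy' := hd y hy
        rw [hpxy] at hx'
        rw [← hxpy] at hy'
        omega
    · rintro ⟨e, he⟩
      induction e using Sym2.ind with
      | _ x y =>
      obtain ⟨hxy, rfl | rfl⟩ : x ≠ y ∧ (p x = y ∨ p y = x) := he
      · exact ⟨⟨x, fun hxr => hxy (by rw [hxr, hr])⟩, rfl⟩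
      · exact ⟨⟨y, fun hyr => hxy (by rw [hyr, hr])⟩, Subtype.ext Sym2.eq_swap⟩
  rw [isTree_iff_connected_and_card, ← Nat.card_eq_of_bijective f hf]
  refine ⟨(connected_iff _).2 ⟨fun x y => (hreach x).trans (hreach y).symm, ⟨r⟩⟩, ?_⟩
  have := Set.ncard_add_ncard_compl {r}
  rw [Set.ncard_singleton, ← Nat.card_coe_set_eq] at this
  change Nat.card ↥({r}ᶜ : Set L) + 1 = _
  omega

end SimpleGraph

section Caterpillar

open SimpleGraph

variable {n : ℕ} (hn : 4 ≤ n)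

/-- Leaves `Fin n` hang below the spine `Fin (n - 2)`, which is a path rooted at `0`; the first
and last spine vertices carry two leaves each, the others one. -/
def caterpillarParent : Fin n ⊕ Fin (n - 2) → Fin n ⊕ Fin (n - 2)
  | .inl i => .inr ⟨min (i - 1) (n - 3), by omega⟩
  | .inr j => .inr ⟨j - 1, by omega⟩

def caterpillar : SimpleGraph (Fin n ⊕ Fin (n - 2)) := ofParent (caterpillarParent hn)

lemma caterpillar_isTree : (caterpillar hn).IsTree :=
  isTree_ofParent (r := .inr ⟨0, by omega⟩) (h := Sum.elim (fun _ => n) (fun j => j))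
    (by simp [caterpillarParent]) (by
      rintro (i | j) hj
      · simp only [caterpillarParent, Sum.elim_inl, Sum.elim_inr]
        omega
      · simp only [caterpillarParent, Sum.elim_inr, ne_eq, Sum.inr.injEq, Fin.ext_iff] at hj ⊢
        omega)

lemma caterpillar_neighborSet_inl (i : Fin n) :
    (caterpillar hn).neighborSet (.inl i) = {caterpillarParent hn (.inl i)} := by
  ext (a | b) <;> simp [caterpillar, ofParent_adj, caterpillarParent, eq_comm]

lemma ncard_caterpillar_neighborSet_inr (j : Fin (n - 2)) :
    ((caterpillar hn).neighborSet (.inr j)).ncard = 3 := by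
  have hj := j.isLt
  rw [Set.ncard_eq_three]
  obtain hj0 | hj0 | hj0 : j.val = 0 ∨ 0 < j.val ∧ j.val < n - 3 ∨ j.val = n - 3 := by omega
  · refine ⟨.inr ⟨1, by omega⟩, .inl ⟨0, by omega⟩, .inl ⟨1, by omega⟩, by simp, by simp,
      by simp [Fin.ext_iff], ?_⟩
    ext (a | b) <;> simp [caterpillar, ofParent_adj, caterpillarParent, Fin.ext_iff] <;> omega
  · refine ⟨.inr ⟨j - 1, by omega⟩, .inr ⟨j + 1, by omega⟩, .inl ⟨j + 1, by omega⟩,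
      by simp [Fin.ext_iff], by simp, by simp, ?_⟩
    ext (a | b) <;> simp [caterpillar, ofParent_adj, caterpillarParent, Fin.ext_iff] <;> omega
  · refine ⟨.inr ⟨j - 1, by omega⟩, .inl ⟨n - 2, by omega⟩, .inl ⟨n - 1, by omega⟩, by simp,
      by simp, by simp [Fin.ext_iff]; omega, ?_⟩
    ext (a | b) <;> simp [caterpillar, ofParent_adj, caterpillarParent, Fin.ext_iff] <;> omega

end Caterpillar

lemma BranchDecomp.nonempty_of_four_le_card (V : Type) [Fintype V] (hV : 4 ≤ Fintype.card V) :
    Nonempty (BranchDecomp V) := by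
  let e := Fintype.equivFin V
  have hleaf (i : Fin (Fintype.card V)) : ((caterpillar hV).neighborSet (.inl i)).ncard = 1 := by
    rw [caterpillar_neighborSet_inl, Set.ncard_singleton]
  exact ⟨{
    L := Fin (Fintype.card V) ⊕ Fin (Fintype.card V - 2)
    finL := inferInstance
    T := caterpillar hV
    isTree := caterpillar_isTree hV
    two_le := by simp only [Nat.card_eq_fintype_card, Fintype.card_sum, Fintype.card_fin]; omega
    subcubic := fun
      | .inl i => .inl (hleaf i)
      | .inr j => .inr (ncard_caterpillar_neighborSet_inr hV j)
    toLeaf := fun v => .inl (e v)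
    inj := fun u v huv => e.injective (Sum.inl_injective huv)
    mem_leaf := fun v => hleaf (e v)
    surj := fun
      | .inl i, _ => ⟨e.symm i, by simp⟩
      | .inr j, h => by rw [ncard_caterpillar_neighborSet_inr] at h; omega }⟩

namespace BranchDecomp

variable {V : Type} (bd : BranchDecomp V) {s t : bd.L}

lemma side_eq_preimage (s t : bd.L) : bd.side s t = bd.toLeaf ⁻¹' bd.T.branch s t := rfl

lemma compl_side (h : bd.T.Adj s t) : (bd.side s t)ᶜ = bd.side t s := by
  rw [side_eq_preimage, side_eq_preimage, ← Set.preimage_compl, bd.isTree.compl_branch h]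

section Finite

variable [Finite V]

lemma ncard_side_add_ncard_side (h : bd.T.Adj s t) :
    (bd.side s t).ncard + (bd.side t s).ncard = Nat.card V := by
  rw [← bd.compl_side h, Set.ncard_add_ncard_compl]

lemma ncard_side_le_one_of_leaf (h : bd.T.Adj s t) (hs : (bd.T.neighborSet s).ncard = 1) :
    (bd.side s t).ncard ≤ 1 := by
  have : bd.T.neighborSet s ⊆ {t} := by
    obtain ⟨u, hu⟩ := Set.ncard_eq_one.1 hs
    have ht : t ∈ bd.T.neighborSet s := h
    rw [hu] at ht ⊢
    exact Set.singleton_subset_singleton.2 ht.symm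
  have hsub : bd.side s t ⊆ bd.toLeaf ⁻¹' {s} :=
    Set.preimage_mono (SimpleGraph.branch_subset_singleton this)
  exact (Set.ncard_le_ncard hsub).trans <| Set.ncard_le_one_iff_subsingleton.2 <|
    Set.subsingleton_singleton.preimage bd.inj

lemma exists_adj_two_mul_ncard_side_ge (h : bd.T.Adj s t) (h2 : 2 ≤ (bd.side s t).ncard) :
    ∃ a, bd.T.Adj a s ∧ (bd.side s t).ncard ≤ 2 * (bd.side a s).ncard ∧
      bd.T.branch a s ⊂ bd.T.branch s t := by
  have := bd.finL
  have hs : (bd.T.neighborSet s).ncard = 3 :=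
    (bd.subcubic s).resolve_left fun hs => by have := bd.ncard_side_le_one_of_leaf h hs; omega
  obtain ⟨a, b, -, hab⟩ : ∃ a b, a ≠ b ∧ bd.T.neighborSet s \ {t} = {a, b} := by
    rw [← Set.ncard_eq_two, Set.ncard_sdiff_singleton_of_mem (s := bd.T.neighborSet s) h, hs]
  have hnbr (c : bd.L) : bd.T.Adj s c ∧ c ≠ t ↔ c = a ∨ c = b := Set.ext_iff.1 hab c
  have hsplit : bd.side s t ⊆ bd.side a s ∪ bd.side b s := by
    intro v hv
    have hvs : bd.toLeaf v ≠ s := fun hvs => by have := bd.mem_leaf v; rw [hvs] at this; omega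
    obtain ⟨c, hsc, hct, hvc⟩ := SimpleGraph.exists_adj_mem_branch hv hvs
    rcases (hnbr c).1 ⟨hsc, hct⟩ with rfl | rfl
    exacts [Or.inl hvc, Or.inr hvc]
  have hcard := (Set.ncard_le_ncard hsplit).trans (Set.ncard_union_le _ _)
  obtain ⟨c, hc, hc2⟩ : ∃ c, (c = a ∨ c = b) ∧
      (bd.side s t).ncard ≤ 2 * (bd.side c s).ncard := by
    rcases le_total (bd.side a s).ncard (bd.side b s).ncard with hle | hle
    exacts [⟨b, .inr rfl, by omega⟩, ⟨a, .inl rfl, by omega⟩]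
  obtain ⟨hsc, hct⟩ := (hnbr c).2 hc
  exact ⟨c, hsc.symm, hc2, bd.isTree.isAcyclic.branch_ssubset hsc hct⟩

lemma exists_balanced_edge (q : ℕ) (hq : 3 * q ≤ Nat.card V) :
    ∃ s t, bd.T.Adj s t ∧ q ≤ (bd.side s t).ncard ∧ q ≤ (bd.side t s).ncard := by
  have := bd.finL
  have : Nontrivial bd.L := Finite.one_lt_card_iff_nontrivial.1 bd.two_le
  obtain ⟨s₀⟩ := (inferInstance : Nonempty bd.L)
  obtain ⟨t₀, h₀⟩ := bd.isTree.connected.preconnected.exists_adj_of_nontrivial s₀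
  set P := {p : bd.L × bd.L | bd.T.Adj p.1 p.2 ∧ q ≤ (bd.side p.1 p.2).ncard}
  have hP : P.Nonempty := by
    have := bd.ncard_side_add_ncard_side h₀
    by_cases hq₀ : q ≤ (bd.side s₀ t₀).ncard
    exacts [⟨(s₀, t₀), h₀, hq₀⟩, ⟨(t₀, s₀), h₀.symm, by simp only; omega⟩]
  -- Among the edges oriented towards a side with at least `q` vertices take one with minimal
  -- branch: if the other side had fewer than `q`, a larger half one step further would be smaller.
  obtain ⟨⟨s, t⟩, ⟨hst, hqs⟩, hmin⟩ :=
    P.exists_min_image (fun p => (bd.T.branch p.1 p.2).ncard) P.toFinite hP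
  dsimp only at hst hqs hmin
  refine ⟨s, t, hst, hqs, not_lt.1 fun hlt => ?_⟩
  have := bd.ncard_side_add_ncard_side hst
  obtain ⟨a, has, hhalf, hsub⟩ := bd.exists_adj_two_mul_ncard_side_ge hst (by omega)
  exact (Set.ncard_lt_ncard hsub).not_ge
    (hmin (a, s) ⟨has, show q ≤ (bd.side a s).ncard by omega⟩)

end Finite

lemma bimimCut_side_le_width [Fintype V] (E : V → V → Prop) (h : bd.T.Adj s t) :
    bimimCut E (bd.side s t) ≤ bd.width E :=
  le_csSup ⟨2 * Fintype.card (V × V), by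
    rintro _ ⟨s, t, -, rfl⟩
    have h₁ := nu_le_card (D := cutRel E (bd.side s t) (bd.side s t)ᶜ)
    have h₂ := nu_le_card (D := cutRel E (bd.side s t)ᶜ (bd.side s t))
    unfold bimimCut
    omega⟩ ⟨s, t, h, rfl⟩

end BranchDecomp

lemma le_bimimw {V : Type} [Nonempty (BranchDecomp V)] {E : V → V → Prop} {n : ℕ}
    (h : ∀ bd : BranchDecomp V, n ≤ bd.width E) : n ≤ bimimw E :=
  le_csInf (let ⟨bd⟩ := ‹Nonempty (BranchDecomp V)›; ⟨_, bd, rfl⟩) fun _ ⟨bd, hbd⟩ => hbd ▸ h bd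

section PointDigraph

variable {ι : Type} [Fintype ι] {A : Set (ι × ι)}

def pointDigraph (ι : Type) : ι × ι → ι × ι → Prop := fun v w => v.1 = w.2

def crossingIndices (A : Set (ι × ι)) : Set ι :=
  {i | (∃ j, (i, j) ∈ A) ∧ ∃ j, (j, i) ∉ A}

def mixedIndices (A : Set (ι × ι)) : Set ι := crossingIndices A ∪ crossingIndices Aᶜ

lemma ncard_crossingIndices_le_nu (A : Set (ι × ι)) :
    (crossingIndices A).ncard ≤ nu (cutRel (pointDigraph ι) A Aᶜ) := by
  choose f hf using fun i : crossingIndices A => i.2.1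
  choose g hg using fun i : crossingIndices A => i.2.2
  rw [← Nat.card_coe_set_eq, Nat.card_eq_fintype_card, ← Finset.card_univ]
  exact card_le_nu_cutRel _ (fun i => (i, f i)) (fun i => (g i, i)) (fun i _ => hf i)
    (fun i _ => hg i) fun i _ j _ => Subtype.ext_iff.symm

lemma ncard_mixedIndices_le_bimimCut (A : Set (ι × ι)) :
    (mixedIndices A).ncard ≤ bimimCut (pointDigraph ι) A := by
  have h₁ := ncard_crossingIndices_le_nu A
  have h₂ := ncard_crossingIndices_le_nu Aᶜ
  rw [compl_compl] at h₂
  exact (Set.ncard_union_le _ _).trans (Nat.add_le_add h₁ h₂)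

lemma mem_mixedIndices_of_row {i j j' : ι} (h : (i, j) ∈ A) (h' : (i, j') ∉ A) :
    i ∈ mixedIndices A := by
  by_cases hcol : ∃ k, (k, i) ∉ A
  · exact .inl ⟨⟨j, h⟩, hcol⟩
  · exact .inr ⟨⟨j', h'⟩, i, not_not.2 (not_exists_not.1 hcol i)⟩

lemma mem_mixedIndices_of_col {i j j' : ι} (h : (j, i) ∈ A) (h' : (j', i) ∉ A) :
    i ∈ mixedIndices A := by
  by_cases hrow : ∃ k, (i, k) ∈ A
  · exact .inl ⟨hrow, j', h'⟩
  · exact .inr ⟨⟨i, fun hi => hrow ⟨i, hi⟩⟩, j, not_not.2 h⟩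

lemma subset_mixedIndices_prod {i : ι} (hi : i ∉ mixedIndices A) :
    Aᶜ ⊆ mixedIndices A ×ˢ mixedIndices A ∨ A ⊆ mixedIndices A ×ˢ mixedIndices A := by
  by_cases hii : (i, i) ∈ A
  · have hrow : ∀ j, (i, j) ∈ A := fun j =>
      by_contra fun h => hi (mem_mixedIndices_of_row hii h)
    have hcol : ∀ j, (j, i) ∈ A := fun j =>
      by_contra fun h => hi (mem_mixedIndices_of_col hii h)
    exact .inl fun v hv => ⟨mem_mixedIndices_of_row (hcol v.1) hv,
      mem_mixedIndices_of_col (hrow v.2) hv⟩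
  · have hrow : ∀ j, (i, j) ∉ A := fun j h => hi (mem_mixedIndices_of_row h hii)
    have hcol : ∀ j, (j, i) ∉ A := fun j h => hi (mem_mixedIndices_of_col h hii)
    exact .inr fun v hv => ⟨mem_mixedIndices_of_row hv (hcol v.1),
      mem_mixedIndices_of_col hv (hrow v.2)⟩

lemma lt_bimimCut_pointDigraph {k : ℕ} (hk : k < Fintype.card ι) (hA : k ^ 2 < A.ncard)
    (hAc : k ^ 2 < Aᶜ.ncard) : k < bimimCut (pointDigraph ι) A := by
  set U := mixedIndices A
  by_contra! hle
  have hU : U.ncard ≤ k := (ncard_mixedIndices_le_bimimCut A).trans hle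
  obtain ⟨i, hi⟩ : ∃ i, i ∉ U := by
    by_contra! h
    rw [← Set.eq_univ_iff_forall] at h
    rw [h, Set.ncard_univ, Nat.card_eq_fintype_card] at hU
    omega
  have hsq : ∀ B : Set (ι × ι), B ⊆ U ×ˢ U → B.ncard ≤ k ^ 2 := fun B hB => by
    have := Set.ncard_le_ncard hB
    rw [Set.ncard_prod] at this
    nlinarith
  rcases subset_mixedIndices_prod hi with h | h
  exacts [(hsq _ h).not_gt hAc, (hsq _ h).not_gt hA]

end PointDigraph

lemma lt_bimimw_pointDigraph {ι : Type} [Fintype ι] {k : ℕ} (hk : k < Fintype.card ι)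
    (hcard : 3 * (k ^ 2 + 1) ≤ Fintype.card ι ^ 2) : k < bimimw (pointDigraph ι) := by
  have hV : Nat.card (ι × ι) = Fintype.card ι ^ 2 := by simp [sq]
  have hι : 2 ≤ Fintype.card ι := (Nat.pow_lt_pow_iff_left two_ne_zero).1 (by omega)
  have : Nonempty (BranchDecomp (ι × ι)) :=
    BranchDecomp.nonempty_of_four_le_card _ (by rw [Fintype.card_prod]; nlinarith)
  refine le_bimimw fun bd => ?_
  obtain ⟨s, t, hst, h₁, h₂⟩ := bd.exists_balanced_edge (k ^ 2 + 1) (hV ▸ hcard)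
  rw [← bd.compl_side hst] at h₂
  exact (lt_bimimCut_pointDigraph hk h₁ h₂).trans_le (bd.bimimCut_side_le_width _ hst)

theorem stmt_10_general (k : ℕ) :
    ∃ (V : Type) (_ : Fintype V) (E : V → V → Prop) (S T : V → Set ℝ),
      (∀ v, ∃ a b : ℝ, a ≤ b ∧ S v = Set.Icc a b) ∧
        (∀ v, ∃ a b : ℝ, a ≤ b ∧ T v = Set.Icc a b) ∧
        (∀ v w, E v w ↔ (S v ∩ T w).Nonempty) ∧
        k ≤ bimimw E := by
  refine ⟨Fin (2 * k + 2) × Fin (2 * k + 2), inferInstance, pointDigraph _,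
    fun v => Set.Icc ((v.1 : ℕ) : ℝ) (v.1 : ℕ), fun v => Set.Icc ((v.2 : ℕ) : ℝ) (v.2 : ℕ),
    fun v => ⟨_, _, le_rfl, rfl⟩, fun v => ⟨_, _, le_rfl, rfl⟩, fun v w => ?_, ?_⟩
  · simp [pointDigraph, Fin.val_inj, eq_comm]
  · exact (lt_bimimw_pointDigraph (by simp only [Fintype.card_fin]; omega)
      (by simp only [Fintype.card_fin]; ring_nf; omega)).le

theorem stmt_10 (k : ℕ) (hk : 1 ≤ k) :
    ∃ (V : Type) (_ : Fintype V) (E : V → V → Prop) (S T : V → Set ℝ),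
      (∀ v, ∃ a b : ℝ, a ≤ b ∧ S v = Set.Icc a b) ∧
        (∀ v, ∃ a b : ℝ, a ≤ b ∧ T v = Set.Icc a b) ∧
        (∀ v w, E v w ↔ (S v ∩ T w).Nonempty) ∧
        k ≤ bimimw E :=
  stmt_10_general k
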